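/- arXiv:math/0503599 — 5 statements merged into one kernel-verified Lean document; each statement's English description precedes it below -/
import Mathlib

section
/- Let a ≥ 0 and 0 < p < 2 + a. There exists a constant c = c(a,p) such that for every y₁ on the unit circle ∂D₀ and every R ∈ (0, 3], ∫_{D₀ ∩ B(y₁,R)} (1 − |x|)^{a+p} · |x − y₁|^{−2p} dx ≤ c·R^{2+a−p}. -/
/-!
Since `‖y₁‖ = 1`, the distance to the boundary satisfies `1 - ‖x‖ ≤ ‖x - y₁‖`, so the integrand
is at most `‖x - y₁‖ ^ (a - p)`. After translating `y₁` to the origin and rescaling by `R`, the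
integral of this majorant over `B(y₁, R)` equals `R ^ (2 + a - p)` times its integral over the
unit disc, which is finite because `a - p > -2`.
-/

open MeasureTheory Metric Module

lemma one_sub_norm_rpow_mul_norm_sub_rpow_le {E : Type*} [SeminormedAddCommGroup E] {x y : E}
    (hx : ‖x‖ < 1) (hy : ‖y‖ = 1) {s : ℝ} (hs : 0 ≤ s) (t : ℝ) :
    (1 - ‖x‖) ^ s * ‖x - y‖ ^ t ≤ ‖x - y‖ ^ (s + t) := by
  have hdist : 1 - ‖x‖ ≤ ‖x - y‖ := by
    simpa [hy, norm_sub_rev] using norm_sub_norm_le y x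
  rw [Real.rpow_add (by linarith)]
  gcongr

section Translation

variable {E F : Type*} [SeminormedAddCommGroup E] [MeasurableSpace E] [MeasurableAdd E]
  [NormedAddCommGroup F] (μ : Measure E) [μ.IsAddLeftInvariant]

lemma integrableOn_ball_comp_sub_iff {f : E → F} (x₀ : E) (r : ℝ) :
    IntegrableOn (fun x => f (x - x₀)) (ball x₀ r) μ ↔ IntegrableOn f (ball 0 r) μ := by
  rw [← (measurePreserving_add_left μ x₀).integrableOn_comp_preimage
    (measurableEmbedding_addLeft x₀), preimage_add_ball, sub_self]
  simp only [Function.comp_def, add_sub_cancel_left]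

lemma setIntegral_ball_comp_sub [NormedSpace ℝ F] (f : E → F) (x₀ : E) (r : ℝ) :
    ∫ x in ball x₀ r, f (x - x₀) ∂μ = ∫ x in ball 0 r, f x ∂μ := by
  rw [← (measurePreserving_add_left μ x₀).setIntegral_preimage_emb
    (measurableEmbedding_addLeft x₀), preimage_add_ball, sub_self]
  simp only [add_sub_cancel_left]

end Translation

section NormRpow

variable {E : Type*} [NormedAddCommGroup E] [NormedSpace ℝ E] [FiniteDimensional ℝ E]
  [MeasurableSpace E] [BorelSpace E] (μ : Measure E) [μ.IsAddHaarMeasure]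

lemma integrableOn_ball_norm_rpow (hE : 1 ≤ finrank ℝ E) {q : ℝ} (hq : -(finrank ℝ E : ℝ) < q)
    (r : ℝ) : IntegrableOn (fun x : E => ‖x‖ ^ q) (ball 0 r) μ := by
  refine integrableOn_ball_of_norm_le_rpow hE (C := 1) (α := -q) (by linarith)
    (Filter.Eventually.of_forall fun x => ?_)
    (continuous_norm.measurable.pow_const q).aestronglyMeasurable
  rw [one_mul, neg_neg, Real.norm_of_nonneg (by positivity)]

lemma setIntegral_ball_norm_rpow (q : ℝ) {r : ℝ} (hr : 0 < r) :
    ∫ x in ball (0 : E) r, ‖x‖ ^ q ∂μ =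
      r ^ (finrank ℝ E + q) * ∫ x in ball (0 : E) 1, ‖x‖ ^ q ∂μ := by
  have hscale := Measure.setIntegral_comp_smul_of_pos μ (fun x : E => ‖x‖ ^ q) (ball 0 1) hr
  simp only [norm_smul, Real.norm_of_nonneg hr.le, Real.mul_rpow hr.le (norm_nonneg _),
    integral_const_mul, smul_unitBall_of_pos hr, smul_eq_mul] at hscale
  have hpow : (0 : ℝ) < r ^ finrank ℝ E := by positivity
  rw [Real.rpow_add hr, Real.rpow_natCast, mul_assoc, hscale, mul_inv_cancel_left₀ hpow.ne']

lemma setIntegral_unitBall_inter_ball_le (hE : 1 ≤ finrank ℝ E) {y : E} (hy : ‖y‖ = 1)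
    {s t : ℝ} (hs : 0 ≤ s) (hst : -(finrank ℝ E : ℝ) < s + t) {R : ℝ} (hR : 0 < R) :
    ∫ x in ball 0 1 ∩ ball y R, (1 - ‖x‖) ^ s * ‖x - y‖ ^ t ∂μ
      ≤ R ^ (finrank ℝ E + (s + t)) * ∫ x in ball (0 : E) 1, ‖x‖ ^ (s + t) ∂μ := by
  have hint : IntegrableOn (fun x => ‖x - y‖ ^ (s + t)) (ball y R) μ :=
    (integrableOn_ball_comp_sub_iff μ y R).2 (integrableOn_ball_norm_rpow μ hE hst R)
  have hmeas : MeasurableSet (ball (0 : E) 1 ∩ ball y R) :=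
    measurableSet_ball.inter measurableSet_ball
  calc ∫ x in ball 0 1 ∩ ball y R, (1 - ‖x‖) ^ s * ‖x - y‖ ^ t ∂μ
      ≤ ∫ x in ball 0 1 ∩ ball y R, ‖x - y‖ ^ (s + t) ∂μ := by
        refine integral_mono_of_nonneg (ae_restrict_of_forall_mem hmeas fun x hx => ?_)
          (hint.mono_set Set.inter_subset_right) (ae_restrict_of_forall_mem hmeas fun x hx => ?_)
        · have : ‖x‖ < 1 := mem_ball_zero_iff.1 hx.1
          exact mul_nonneg (Real.rpow_nonneg (by linarith) _) (by positivity)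
        · exact one_sub_norm_rpow_mul_norm_sub_rpow_le (mem_ball_zero_iff.1 hx.1) hy hs t
    _ ≤ ∫ x in ball y R, ‖x - y‖ ^ (s + t) ∂μ :=
        setIntegral_mono_set hint (ae_restrict_of_forall_mem measurableSet_ball fun x _ => by
          positivity) Set.inter_subset_right.eventuallyLE
    _ = R ^ (finrank ℝ E + (s + t)) * ∫ x in ball (0 : E) 1, ‖x‖ ^ (s + t) ∂μ := by
        rw [setIntegral_ball_comp_sub μ (fun x => ‖x‖ ^ (s + t)),
          setIntegral_ball_norm_rpow μ _ hR]

end NormRpow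

/-- For `a ≥ 0` and `0 < p < 2 + a`, there is `c = c(a,p)` such that for every `y₁` on the
unit circle and every `R ∈ (0,3]`,
`∫_{D₀ ∩ B(y₁,R)} (1 − |x|)^{a+p}·|x − y₁|^{−2p} dx ≤ c·R^{2+a−p}`. -/
theorem integral_near_boundary_ball_le (a p : ℝ) (ha : 0 ≤ a) (hp : 0 < p)
    (hpa : p < 2 + a) :
    ∃ c : ℝ, 0 < c ∧ ∀ y₁ : ℂ, ‖y₁‖ = 1 → ∀ R : ℝ, 0 < R → R ≤ 3 →
      ∫ x in Metric.ball (0 : ℂ) 1 ∩ Metric.ball y₁ R,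
          (1 - ‖x‖) ^ (a + p) * ‖x - y₁‖ ^ (-(2 * p)) ≤ c * R ^ (2 + a - p) := by
  have hdim : finrank ℝ ℂ = 2 := Complex.finrank_real_complex
  have hexp : a + p + -(2 * p) = a - p := by ring
  set C := ∫ x in ball (0 : ℂ) 1, ‖x‖ ^ (a - p)
  have hC : 0 ≤ C := setIntegral_nonneg measurableSet_ball fun x _ => by positivity
  refine ⟨C + 1, by positivity, fun y₁ hy₁ R hR _ => ?_⟩
  have hbound := setIntegral_unitBall_inter_ball_le volume (by rw [hdim]; norm_num) hy₁
    (by linarith : 0 ≤ a + p) (by rw [hdim, hexp]; push_cast; linarith) hR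
  rw [hexp, hdim, Nat.cast_ofNat, ← add_sub_assoc] at hbound
  calc _ ≤ R ^ (2 + a - p) * C := hbound
    _ ≤ (C + 1) * R ^ (2 + a - p) := by nlinarith [Real.rpow_nonneg hR.le (2 + a - p)]
end

section
/- Let a ≥ 0 and p > 0. There exists a constant c = c(a,p) such that for every y₁ on the unit circle ∂D₀ and every δ ∈ (0, 1]: ∫_{D₀ \ B(y₁,2δ)} (1 − |x|)^{a+p} · |x − y₁|^{−3p} dx is at most c if 0 < p < (2+a)/2; at most c·(1 + log(1/δ)) if p = (2+a)/2; and at most c·δ^{2+a−2p} if p > (2+a)/2. -/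
/-!
Since `‖y₁‖ = 1`, the weight satisfies `1 - ‖x‖ ≤ ‖x - y₁‖`, so the integrand is at most
`‖x - y₁‖ ^ (a - 2p)`. The domain lies in the annulus `2δ ≤ ‖x - y₁‖ ≤ 2`, and in polar
coordinates around `y₁` the integral becomes `2π ∫_{2δ}^{2} r ^ (1 + a - 2p) dr`, which is
bounded, logarithmic, or of order `δ ^ (2 + a - 2p)` according to the sign of `2 + a - 2p`.
-/

open MeasureTheory Metric Set Real

lemma rpow_mul_rpow_le_rpow_add {t d α β : ℝ} (ht : 0 ≤ t) (htd : t ≤ d) (hd : 0 < d)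
    (hα : 0 ≤ α) : t ^ α * d ^ β ≤ d ^ (α + β) := by
  rw [rpow_add hd]
  gcongr

lemma integral_annulus_norm_sub_rpow (y : ℂ) (s : ℝ) {ρ R : ℝ} (hρ : 0 < ρ) (hρR : ρ ≤ R) :
    ∫ x in closedBall y R \ ball y ρ, ‖x - y‖ ^ s = 2 * π * ∫ r in ρ..R, r ^ (s + 1) := by
  have hind : ∀ x : ℂ, (closedBall y R \ ball y ρ).indicator (fun x => ‖x - y‖ ^ s) x
      = (Icc ρ R).indicator (fun r => r ^ s) ‖x - y‖ := by
    classical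
    intro x
    rw [indicator_apply, indicator_apply]
    congr 1
    simp only [mem_sdiff, mem_closedBall, mem_ball, not_lt, dist_eq_norm, mem_Icc, and_comm]
  have hradial : ∀ r : ℝ, r ^ (2 - 1) • (Icc ρ R).indicator (fun r => r ^ s) r
      = (Icc ρ R).indicator (fun r => r ^ (s + 1)) r := by
    intro r
    by_cases hr : r ∈ Icc ρ R
    · norm_num [indicator_of_mem hr, rpow_add_one (hρ.trans_le hr.1).ne', mul_comm]
    · simp [indicator_of_notMem hr]
  have hvol : volume.real (ball (0 : ℂ) 1) = π := by
    simp [measureReal_def, Complex.volume_ball]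
  have hIcc : Ioi (0 : ℝ) ∩ Icc ρ R = Icc ρ R :=
    inter_eq_right.mpr fun r hr => hρ.trans_le hr.1
  rw [← integral_indicator (measurableSet_closedBall.diff measurableSet_ball)]
  simp_rw [hind]
  rw [integral_sub_right_eq_self (fun x => (Icc ρ R).indicator (fun r => r ^ s) ‖x‖) y,
    integral_fun_norm_addHaar volume, Complex.finrank_real_complex]
  simp_rw [hradial]
  rw [setIntegral_indicator measurableSet_Icc, hIcc, integral_Icc_eq_integral_Ioc,
    ← intervalIntegral.integral_of_le hρR, hvol, nsmul_eq_mul, smul_eq_mul, Nat.cast_ofNat,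
    mul_assoc]

lemma setIntegral_ball_diff_ball_le {y : ℂ} (hy : ‖y‖ = 1) {α β ρ : ℝ} (hα : 0 ≤ α)
    (hρ : 0 < ρ) (hρ2 : ρ ≤ 2) :
    ∫ x in ball (0 : ℂ) 1 \ ball y ρ, (1 - ‖x‖) ^ α * ‖x - y‖ ^ β
      ≤ 2 * π * ∫ r in ρ..2, r ^ (α + β + 1) := by
  set S := ball (0 : ℂ) 1 \ ball y ρ
  set A := closedBall y 2 \ ball y ρ
  have hS : ∀ x ∈ S, 0 ≤ 1 - ‖x‖ ∧ 1 - ‖x‖ ≤ ‖x - y‖ ∧ ρ ≤ ‖x - y‖ := by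
    rintro x ⟨hx1, hxρ⟩
    rw [mem_ball_zero_iff] at hx1
    rw [mem_ball, not_lt, dist_eq_norm] at hxρ
    have := norm_sub_norm_le y x
    rw [hy, norm_sub_rev] at this
    exact ⟨by linarith, by linarith, hxρ⟩
  have hSA : S ⊆ A := by
    rintro x ⟨hx1, hxρ⟩
    refine ⟨?_, hxρ⟩
    rw [mem_ball_zero_iff] at hx1
    rw [mem_closedBall, dist_eq_norm]
    linarith [norm_sub_le x y]
  have hA_int : IntegrableOn (fun x => ‖x - y‖ ^ (α + β)) A := by
    refine ContinuousOn.integrableOn_compact ((isCompact_closedBall y 2).diff isOpen_ball) ?_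
    refine (continuous_sub_right y).norm.continuousOn.rpow_const fun x hx => Or.inl ?_
    have hxρ := hx.2
    rw [mem_ball, not_lt, dist_eq_norm] at hxρ
    exact (hρ.trans_le hxρ).ne'
  calc ∫ x in S, (1 - ‖x‖) ^ α * ‖x - y‖ ^ β
      ≤ ∫ x in S, ‖x - y‖ ^ (α + β) := by
        refine integral_mono_of_nonneg ?_ (hA_int.mono_set hSA) ?_
        · refine ae_restrict_of_forall_mem (measurableSet_ball.diff measurableSet_ball) ?_
          intro x hx
          have := (hS x hx).1
          positivity
        · refine ae_restrict_of_forall_mem (measurableSet_ball.diff measurableSet_ball) ?_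
          intro x hx
          obtain ⟨h0, hle, hρle⟩ := hS x hx
          exact rpow_mul_rpow_le_rpow_add h0 hle (hρ.trans_le hρle) hα
    _ ≤ ∫ x in A, ‖x - y‖ ^ (α + β) :=
        setIntegral_mono_set hA_int (ae_of_all _ fun x => by positivity)
          hSA.eventuallyLE
    _ = 2 * π * ∫ r in ρ..2, r ^ (α + β + 1) := integral_annulus_norm_sub_rpow y _ hρ hρ2

lemma integral_rpow_sub_one_le_of_pos {s ρ R : ℝ} (hs : 0 < s) (hρ : 0 ≤ ρ) :
    ∫ r in ρ..R, r ^ (s - 1) ≤ R ^ s / s := by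
  rw [integral_rpow (Or.inl (by linarith)), sub_add_cancel]
  gcongr
  exact sub_le_self _ (rpow_nonneg hρ s)

lemma integral_rpow_neg_one {ρ R : ℝ} (hρ : 0 < ρ) (hR : 0 < R) :
    ∫ r in ρ..R, r ^ (-1 : ℝ) = log (R / ρ) := by
  simp only [rpow_neg_one]
  exact integral_inv_of_pos hρ hR

lemma integral_rpow_sub_one_le_of_neg {s ρ R : ℝ} (hs : s < 0) (hρ : 0 < ρ) (hρR : ρ ≤ R) :
    ∫ r in ρ..R, r ^ (s - 1) ≤ ρ ^ s / -s := by
  have h0 : (0 : ℝ) ∉ uIcc ρ R := by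
    rw [uIcc_of_le hρR]
    exact fun h => h.1.not_gt hρ
  rw [integral_rpow (Or.inr ⟨by linarith, h0⟩), sub_add_cancel, ← neg_div_neg_eq, neg_sub]
  gcongr
  · linarith
  · exact sub_le_self _ (rpow_nonneg (hρ.trans_le hρR).le s)

/-- For `a ≥ 0` and `p > 0`, there is `c = c(a,p)` such that for every `y₁` on the unit circle
and every `δ ∈ (0,1]`, the integral `∫_{D₀ \ B(y₁,2δ)} (1 − |x|)^{a+p}·|x − y₁|^{−3p} dx` is at
most `c` if `p < (2+a)/2`, at most `c·(1 + log(1/δ))` if `p = (2+a)/2`, and at most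
`c·δ^{2+a−2p}` if `p > (2+a)/2`. -/
theorem integral_away_from_boundary_point_le (a p : ℝ) (ha : 0 ≤ a) (hp : 0 < p) :
    ∃ c : ℝ, 0 < c ∧ ∀ y₁ : ℂ, ‖y₁‖ = 1 → ∀ δ : ℝ, 0 < δ → δ ≤ 1 →
      ((p < (2 + a) / 2 →
        ∫ x in Metric.ball (0 : ℂ) 1 \ Metric.ball y₁ (2 * δ),
          (1 - ‖x‖) ^ (a + p) * ‖x - y₁‖ ^ (-(3 * p)) ≤ c) ∧
      (p = (2 + a) / 2 →
        ∫ x in Metric.ball (0 : ℂ) 1 \ Metric.ball y₁ (2 * δ),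
          (1 - ‖x‖) ^ (a + p) * ‖x - y₁‖ ^ (-(3 * p)) ≤ c * (1 + Real.log (1 / δ))) ∧
      ((2 + a) / 2 < p →
        ∫ x in Metric.ball (0 : ℂ) 1 \ Metric.ball y₁ (2 * δ),
          (1 - ‖x‖) ^ (a + p) * ‖x - y₁‖ ^ (-(3 * p)) ≤ c * δ ^ (2 + a - 2 * p))) := by
  set e := 2 + a - 2 * p
  have hexp : a + p + -(3 * p) + 1 = e - 1 := by ring
  have radial : ∀ y₁ : ℂ, ‖y₁‖ = 1 → ∀ δ : ℝ, 0 < δ → δ ≤ 1 →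
      ∫ x in ball (0 : ℂ) 1 \ ball y₁ (2 * δ), (1 - ‖x‖) ^ (a + p) * ‖x - y₁‖ ^ (-(3 * p))
        ≤ 2 * π * ∫ r in (2 * δ)..2, r ^ (e - 1) := fun y₁ hy δ hδ hδ1 => by
    simpa only [hexp] using
      setIntegral_ball_diff_ball_le (β := -(3 * p)) hy (by linarith : 0 ≤ a + p)
        (by linarith : 0 < 2 * δ) (by linarith)
  rcases lt_trichotomy 0 e with he_pos | he_zero | he_neg
  · refine ⟨2 * π * (2 ^ e / e), by positivity, fun y₁ hy δ hδ hδ1 =>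
      ⟨fun _ => ?_, fun h => by linarith, fun h => by linarith⟩⟩
    exact (radial y₁ hy δ hδ hδ1).trans
      (by gcongr; exact integral_rpow_sub_one_le_of_pos he_pos (by linarith))
  · refine ⟨2 * π, by positivity, fun y₁ hy δ hδ hδ1 =>
      ⟨fun h => by linarith, fun _ => ?_, fun h => by linarith⟩⟩
    calc _ ≤ 2 * π * ∫ r in (2 * δ)..2, r ^ (e - 1) := radial y₁ hy δ hδ hδ1
      _ = 2 * π * log (1 / δ) := by
        rw [← he_zero, zero_sub, integral_rpow_neg_one (by linarith) two_pos]
        field_simp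
      _ ≤ 2 * π * (1 + log (1 / δ)) := by linarith [pi_pos]
  · have he_neg' : 0 < -e := by linarith
    refine ⟨2 * π * (2 ^ e / -e), by positivity, fun y₁ hy δ hδ hδ1 =>
      ⟨fun h => by linarith, fun h => by linarith, fun _ => ?_⟩⟩
    calc _ ≤ 2 * π * ∫ r in (2 * δ)..2, r ^ (e - 1) := radial y₁ hy δ hδ hδ1
      _ ≤ 2 * π * ((2 * δ) ^ e / -e) := by
        gcongr; exact integral_rpow_sub_one_le_of_neg he_neg (by linarith) (by linarith)
      _ = 2 * π * (2 ^ e / -e) * δ ^ e := by rw [mul_rpow two_pos.le hδ.le]; ring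
end

section
/- Let a ≥ 0 and (2+a)/2 < p < 2 + a. There exists a constant c = c(p,a) such that for all y₁, y₂ on the unit circle ∂D₀, ∫_{D₀} (1 − |x|)^a · |P₀(x,y₁) − P₀(x,y₂)|^p dx ≤ c·|y₁ − y₂|^{2+a−p}. -/
open MeasureTheory

/-- The Poisson kernel of the unit disc, viewed in `ℂ ≃ ℝ²`. -/
noncomputable def unitDiscPoissonKernel (x y : ℂ) : ℝ :=
  (1 / (2 * Real.pi)) * (1 - ‖x‖ ^ 2) / ‖y - x‖ ^ 2

/-!
Put `δ = ‖y₁ - y₂‖` and `d = min ‖x - y₁‖ ‖x - y₂‖ ≥ 1 - ‖x‖`. Since `1 - ‖x‖² ≤ 2d`, the kernel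
difference is at most `(2/π) · min (1/d) (δ/d²)`, so the integrand is dominated by
`(2/π)^p (G (x - y₁) + G (x - y₂))` with `G z = min (‖z‖^(a-p)) (δ^p ‖z‖^(a-2p))`. In the plane `G`
is integrable because `a - p > -2` (near `0`) and `a - 2p < -2` (near `∞`), and the substitution
`z = δ w` gives `∫ G = δ^(2+a-p) ∫ min (‖w‖^(a-p)) (‖w‖^(a-2p))`.
-/

open Set Metric Module

section

variable {E : Type*} [NormedAddCommGroup E] [NormedSpace ℝ E] [FiniteDimensional ℝ E]
  [MeasurableSpace E] [BorelSpace E] (μ : Measure E) [μ.IsAddHaarMeasure]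

theorem integrable_min_norm_rpow [Nontrivial E] {s t : ℝ} (hs : -(finrank ℝ E : ℝ) < s)
    (ht : t < -(finrank ℝ E : ℝ)) :
    Integrable (fun x : E ↦ min (‖x‖ ^ s) (‖x‖ ^ t)) μ := by
  have hn : ((finrank ℝ E - 1 : ℕ) : ℝ) = finrank ℝ E - 1 := by
    rw [Nat.cast_sub finrank_pos, Nat.cast_one]
  have hpow : ∀ {y : ℝ} (r : ℝ), 0 < y →
      y ^ (finrank ℝ E - 1) * y ^ r = y ^ (finrank ℝ E - 1 + r) :=
    fun r hy ↦ by rw [← hn, Real.rpow_add hy, Real.rpow_natCast]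
  rw [integrable_fun_norm_addHaar μ (f := fun r ↦ min (r ^ s) (r ^ t)),
    ← Ioc_union_Ioi_eq_Ioi zero_le_one]
  refine IntegrableOn.union ?_ ?_
  · have : IntegrableOn (fun y : ℝ ↦ y ^ (finrank ℝ E - 1 + s)) (Ioc 0 1) :=
      (intervalIntegrable_iff_integrableOn_Ioc_of_le zero_le_one).1
        (intervalIntegral.intervalIntegrable_rpow' (by linarith))
    refine this.mono' (by fun_prop) ((ae_restrict_iff' measurableSet_Ioc).2 (.of_forall ?_))
    rintro y ⟨hy, -⟩
    rw [Real.norm_of_nonneg (by positivity), smul_eq_mul, ← hpow s hy]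
    exact mul_le_mul_of_nonneg_left (min_le_left _ _) (by positivity)
  · refine (integrableOn_Ioi_rpow_of_lt (by linarith : finrank ℝ E - 1 + t < -1) one_pos).mono'
      (by fun_prop) ((ae_restrict_iff' measurableSet_Ioi).2 (.of_forall ?_))
    intro y (hy : 1 < y)
    have hy : 0 < y := one_pos.trans hy
    rw [Real.norm_of_nonneg (by positivity), smul_eq_mul, ← hpow t hy]
    exact mul_le_mul_of_nonneg_left (min_le_right _ _) (by positivity)

theorem min_rpow_mul_rpow_eq {r δ : ℝ} (hr : 0 ≤ r) (hδ : 0 < δ) (s t : ℝ) :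
    min (r ^ s) (δ ^ (s - t) * r ^ t) = δ ^ s * min ((δ⁻¹ * r) ^ s) ((δ⁻¹ * r) ^ t) := by
  rw [mul_min_of_nonneg _ _ (by positivity), Real.mul_rpow (by positivity) hr,
    Real.mul_rpow (by positivity) hr, Real.inv_rpow hδ.le, Real.inv_rpow hδ.le,
    mul_inv_cancel_left₀ (by positivity), ← mul_assoc, ← div_eq_mul_inv, ← Real.rpow_sub hδ]

theorem integral_min_norm_rpow_mul_rpow {δ : ℝ} (hδ : 0 < δ) (s t : ℝ) :
    ∫ x, min (‖x‖ ^ s) (δ ^ (s - t) * ‖x‖ ^ t) ∂μ =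
      δ ^ (finrank ℝ E + s) * ∫ x, min (‖x‖ ^ s) (‖x‖ ^ t) ∂μ := by
  simp_rw [min_rpow_mul_rpow_eq (norm_nonneg _) hδ]
  have := Measure.integral_comp_smul μ (fun x : E ↦ min (‖x‖ ^ s) (‖x‖ ^ t)) δ⁻¹
  simp only [norm_smul, Real.norm_of_nonneg (inv_nonneg.2 hδ.le)] at this
  rw [integral_const_mul, this, smul_eq_mul, ← mul_assoc, inv_pow, inv_inv,
    abs_of_pos (by positivity), ← Real.rpow_natCast, ← Real.rpow_add hδ, add_comm s]

theorem MeasureTheory.Integrable.min_norm_rpow_mul_rpow {s t δ : ℝ}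
    (h : Integrable (fun x : E ↦ min (‖x‖ ^ s) (‖x‖ ^ t)) μ) (hδ : 0 < δ) :
    Integrable (fun x : E ↦ min (‖x‖ ^ s) (δ ^ (s - t) * ‖x‖ ^ t)) μ := by
  simp_rw [min_rpow_mul_rpow_eq (norm_nonneg _) hδ]
  have := (integrable_comp_smul_iff μ _ (inv_ne_zero hδ.ne')).2 h
  simp only [norm_smul, Real.norm_of_nonneg (inv_nonneg.2 hδ.le)] at this
  exact this.const_mul _

end

section

variable {G : Type*} [MeasurableSpace G] [AddGroup G] [MeasurableAdd G] {μ : Measure G}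
  [μ.IsAddRightInvariant]

theorem setIntegral_le_two_mul_integral_of_le_add_comp_sub {f g : G → ℝ} {s : Set G} {C : ℝ}
    {y₁ y₂ : G} (hs : MeasurableSet s) (hg : Integrable g μ) (hg₀ : 0 ≤ g) (hC : 0 ≤ C)
    (hf₀ : ∀ x ∈ s, 0 ≤ f x) (hf : ∀ x ∈ s, f x ≤ C * (g (x - y₁) + g (x - y₂))) :
    ∫ x in s, f x ∂μ ≤ 2 * C * ∫ x, g x ∂μ := by
  have hdom : Integrable (fun x ↦ C * (g (x - y₁) + g (x - y₂))) μ :=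
    ((hg.comp_sub_right y₁).add (hg.comp_sub_right y₂)).const_mul _
  calc ∫ x in s, f x ∂μ ≤ ∫ x in s, C * (g (x - y₁) + g (x - y₂)) ∂μ :=
        integral_mono_of_nonneg ((ae_restrict_iff' hs).2 (.of_forall hf₀)) hdom.integrableOn
          ((ae_restrict_iff' hs).2 (.of_forall hf))
    _ ≤ ∫ x, C * (g (x - y₁) + g (x - y₂)) ∂μ :=
        setIntegral_le_integral hdom
          (.of_forall fun x ↦ mul_nonneg hC (add_nonneg (hg₀ _) (hg₀ _)))
    _ = 2 * C * ∫ x, g x ∂μ := by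
        rw [integral_const_mul, integral_add (hg.comp_sub_right y₁) (hg.comp_sub_right y₂),
          integral_sub_right_eq_self, integral_sub_right_eq_self]
        ring

end

theorem abs_div_sq_sub_div_sq_le_two_div_min {t d₁ d₂ : ℝ} (hd₁ : 0 < d₁) (hd₂ : 0 < d₂)
    (ht : 0 ≤ t) (ht₁ : t ≤ 2 * d₁) (ht₂ : t ≤ 2 * d₂) :
    |t / d₁ ^ 2 - t / d₂ ^ 2| ≤ 2 / min d₁ d₂ := by
  have hd : 0 < min d₁ d₂ := lt_min hd₁ hd₂
  have hle : ∀ d, min d₁ d₂ ≤ d → t / d ^ 2 ≤ t / min d₁ d₂ ^ 2 := fun d hd' =>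
    div_le_div_of_nonneg_left ht (by positivity) (pow_le_pow_left₀ hd.le hd' 2)
  have htd : t / min d₁ d₂ ^ 2 ≤ 2 / min d₁ d₂ := by
    rw [div_le_div_iff₀ (by positivity) hd]
    rcases min_choice d₁ d₂ with h | h <;> rw [h] <;> nlinarith
  exact abs_sub_le_of_nonneg_of_le (by positivity) ((hle _ (min_le_left _ _)).trans htd)
    (by positivity) ((hle _ (min_le_right _ _)).trans htd)

theorem abs_div_sq_sub_div_sq_le_four_mul_abs_sub_div_min_sq {t d₁ d₂ : ℝ} (hd₁ : 0 < d₁)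
    (hd₂ : 0 < d₂) (ht : 0 ≤ t) (ht₁ : t ≤ 2 * d₁) (ht₂ : t ≤ 2 * d₂) :
    |t / d₁ ^ 2 - t / d₂ ^ 2| ≤ 4 * |d₁ - d₂| / min d₁ d₂ ^ 2 := by
  wlog h : d₁ ≤ d₂ generalizing d₁ d₂
  · rw [abs_sub_comm, abs_sub_comm d₁, min_comm]
    exact this hd₂ hd₁ ht₂ ht₁ (le_of_not_ge h)
  rw [min_eq_left h, abs_of_nonpos (by linarith : d₁ - d₂ ≤ 0),
    abs_of_nonneg (sub_nonneg.2 (div_le_div_of_nonneg_left ht (by positivity) (by gcongr))),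
    div_sub_div _ _ (by positivity) (by positivity), div_le_div_iff₀ (by positivity) (by positivity)]
  have key : t * (d₂ - d₁) * (d₂ + d₁) ≤ 4 * (d₂ - d₁) * d₂ ^ 2 := by
    have h1 : t * (d₂ + d₁) ≤ 4 * d₂ ^ 2 := by nlinarith
    nlinarith [mul_le_mul_of_nonneg_left h1 (sub_nonneg.2 h)]
  nlinarith [mul_le_mul_of_nonneg_left key (by positivity : (0:ℝ) ≤ d₁ ^ 2)]

theorem rpow_mul_rpow_le_mul_min_rpow {e d δ C Q a p : ℝ} (ha : 0 ≤ a) (hp : 0 ≤ p) (he : 0 ≤ e)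
    (hed : e ≤ d) (hd : 0 < d) (hδ : 0 ≤ δ) (hQ : 0 ≤ Q) (hQ₁ : Q ≤ C / d)
    (hQ₂ : Q ≤ C * δ / d ^ 2) :
    e ^ a * Q ^ p ≤ C ^ p * min (d ^ (a - p)) (δ ^ p * d ^ (a - 2 * p)) := by
  have hC : 0 ≤ C := by
    simpa [div_mul_cancel₀ _ hd.ne'] using mul_nonneg (hQ.trans hQ₁) hd.le
  have hea : e ^ a ≤ d ^ a := Real.rpow_le_rpow he hed ha
  rw [mul_min_of_nonneg _ _ (by positivity)]
  refine le_min ?_ ?_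
  · calc e ^ a * Q ^ p ≤ d ^ a * (C / d) ^ p := by gcongr
      _ = C ^ p * d ^ (a - p) := by rw [Real.div_rpow hC hd.le, Real.rpow_sub hd]; ring
  · calc e ^ a * Q ^ p ≤ d ^ a * (C * δ / d ^ 2) ^ p := by gcongr
      _ = C ^ p * (δ ^ p * d ^ (a - 2 * p)) := by
        rw [Real.div_rpow (by positivity) (by positivity), Real.mul_rpow hC hδ,
          ← Real.rpow_natCast d 2, ← Real.rpow_mul hd.le, Real.rpow_sub hd]
        push_cast
        ring

theorem one_sub_norm_le_norm_sub {E : Type*} [SeminormedAddCommGroup E] {x y : E}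
    (hy : ‖y‖ = 1) :
    1 - ‖x‖ ≤ ‖y - x‖ :=
  hy ▸ norm_sub_norm_le y x

theorem abs_unitDiscPoissonKernel_sub_le {x y₁ y₂ : ℂ} (hx : ‖x‖ < 1) (h₁ : ‖y₁‖ = 1)
    (h₂ : ‖y₂‖ = 1) :
    |unitDiscPoissonKernel x y₁ - unitDiscPoissonKernel x y₂| ≤
        2 / Real.pi / min ‖y₁ - x‖ ‖y₂ - x‖ ∧
      |unitDiscPoissonKernel x y₁ - unitDiscPoissonKernel x y₂| ≤
        2 / Real.pi * ‖y₁ - y₂‖ / min ‖y₁ - x‖ ‖y₂ - x‖ ^ 2 := by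
  have hx₁ := one_sub_norm_le_norm_sub (x := x) h₁
  have hx₂ := one_sub_norm_le_norm_sub (x := x) h₂
  have ht : 0 ≤ 1 - ‖x‖ ^ 2 := by nlinarith [norm_nonneg x]
  have ht₁ : 1 - ‖x‖ ^ 2 ≤ 2 * ‖y₁ - x‖ := by nlinarith [norm_nonneg x]
  have ht₂ : 1 - ‖x‖ ^ 2 ≤ 2 * ‖y₂ - x‖ := by nlinarith [norm_nonneg x]
  have hd₁ : 0 < ‖y₁ - x‖ := by linarith
  have hd₂ : 0 < ‖y₂ - x‖ := by linarith
  have hδ : |‖y₁ - x‖ - ‖y₂ - x‖| ≤ ‖y₁ - y₂‖ := by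
    simpa using abs_norm_sub_norm_le (y₁ - x) (y₂ - x)
  have hP : |unitDiscPoissonKernel x y₁ - unitDiscPoissonKernel x y₂| =
      (2 * Real.pi)⁻¹ * |(1 - ‖x‖ ^ 2) / ‖y₁ - x‖ ^ 2 - (1 - ‖x‖ ^ 2) / ‖y₂ - x‖ ^ 2| := by
    rw [unitDiscPoissonKernel, unitDiscPoissonKernel, mul_div_assoc, mul_div_assoc, ← mul_sub,
      abs_mul, abs_of_pos (by positivity), one_div]
  have hπ := Real.pi_pos
  have hd := lt_min hd₁ hd₂
  rw [hP]
  constructor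
  · calc _ ≤ (2 * Real.pi)⁻¹ * (2 / min ‖y₁ - x‖ ‖y₂ - x‖) := by
          gcongr; exact abs_div_sq_sub_div_sq_le_two_div_min hd₁ hd₂ ht ht₁ ht₂
      _ ≤ 2 / Real.pi / min ‖y₁ - x‖ ‖y₂ - x‖ := by
          rw [← mul_div_assoc, inv_mul_eq_div]
          gcongr
          linarith
  · calc _ ≤ (2 * Real.pi)⁻¹ * (4 * ‖y₁ - y₂‖ / min ‖y₁ - x‖ ‖y₂ - x‖ ^ 2) := by
          gcongr
          exact (abs_div_sq_sub_div_sq_le_four_mul_abs_sub_div_min_sq hd₁ hd₂ ht ht₁ ht₂).trans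
            (by gcongr)
      _ = 2 / Real.pi * ‖y₁ - y₂‖ / min ‖y₁ - x‖ ‖y₂ - x‖ ^ 2 := by
          field_simp; ring

theorem rpow_mul_abs_unitDiscPoissonKernel_sub_rpow_le {a p : ℝ} (ha : 0 ≤ a) (hp : 0 ≤ p)
    {x y₁ y₂ : ℂ} (hx : ‖x‖ < 1) (h₁ : ‖y₁‖ = 1) (h₂ : ‖y₂‖ = 1) :
    (1 - ‖x‖) ^ a * |unitDiscPoissonKernel x y₁ - unitDiscPoissonKernel x y₂| ^ p ≤
      (2 / Real.pi) ^ p *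
        (min (‖x - y₁‖ ^ (a - p)) (‖y₁ - y₂‖ ^ p * ‖x - y₁‖ ^ (a - 2 * p)) +
          min (‖x - y₂‖ ^ (a - p)) (‖y₁ - y₂‖ ^ p * ‖x - y₂‖ ^ (a - 2 * p))) := by
  obtain ⟨hP₁, hP₂⟩ := abs_unitDiscPoissonKernel_sub_le hx h₁ h₂
  have hx₁ := one_sub_norm_le_norm_sub (x := x) h₁
  have hx₂ := one_sub_norm_le_norm_sub (x := x) h₂
  refine (rpow_mul_rpow_le_mul_min_rpow ha hp (sub_nonneg.2 hx.le) (le_min hx₁ hx₂)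
    (lt_min (by linarith) (by linarith)) (norm_nonneg _) (abs_nonneg _) hP₁ hP₂).trans ?_
  gcongr
  rw [norm_sub_rev x y₁, norm_sub_rev x y₂]
  rcases min_choice ‖y₁ - x‖ ‖y₂ - x‖ with h | h <;> rw [h]
  · exact le_add_of_nonneg_right (le_min (by positivity) (by positivity))
  · exact le_add_of_nonneg_left (le_min (by positivity) (by positivity))

/-- Lemma 4.1(a), case `(2+a)/2 < p < 2+a`: there is `c = c(p,a)` such that for all
`y₁, y₂` on the unit circle,
`∫_{D₀} (1 − |x|)^a·|P₀(x,y₁) − P₀(x,y₂)|^p dx ≤ c·|y₁ − y₂|^{2+a−p}`. -/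
theorem integral_abs_poissonKernel_sub_rpow_le_of_gt (a p : ℝ) (ha : 0 ≤ a)
    (hpa : (2 + a) / 2 < p) (hpa' : p < 2 + a) :
    ∃ c : ℝ, 0 < c ∧ ∀ y₁ y₂ : ℂ, ‖y₁‖ = 1 → ‖y₂‖ = 1 →
      ∫ x in Metric.ball (0 : ℂ) 1,
          (1 - ‖x‖) ^ a * |unitDiscPoissonKernel x y₁ - unitDiscPoissonKernel x y₂| ^ p
        ≤ c * ‖y₁ - y₂‖ ^ (2 + a - p) := by
  have hp : 0 < p := by linarith
  have hdim : (finrank ℝ ℂ : ℝ) = 2 := by norm_num [Complex.finrank_real_complex]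
  set I := ∫ z : ℂ, min (‖z‖ ^ (a - p)) (‖z‖ ^ (a - 2 * p)) with hI_def
  have hI : Integrable fun z : ℂ ↦ min (‖z‖ ^ (a - p)) (‖z‖ ^ (a - 2 * p)) :=
    integrable_min_norm_rpow volume (by linarith) (by linarith)
  have hI₀ : 0 ≤ I := integral_nonneg fun z ↦ le_min (by positivity) (by positivity)
  refine ⟨2 * (2 / Real.pi) ^ p * I + 1, by positivity, fun y₁ y₂ h₁ h₂ ↦ ?_⟩
  rcases eq_or_ne y₁ y₂ with rfl | hne
  · simp [Real.zero_rpow hp.ne', Real.zero_rpow (by linarith : 2 + a - p ≠ 0)]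
  have hδ : 0 < ‖y₁ - y₂‖ := norm_sub_pos_iff.2 hne
  have hG := hI.min_norm_rpow_mul_rpow volume hδ
  have hGI := integral_min_norm_rpow_mul_rpow (volume : Measure ℂ) hδ (a - p) (a - 2 * p)
  rw [show a - p - (a - 2 * p) = p by ring] at hG hGI
  calc _ ≤ 2 * (2 / Real.pi) ^ p *
        ∫ z : ℂ, min (‖z‖ ^ (a - p)) (‖y₁ - y₂‖ ^ p * ‖z‖ ^ (a - 2 * p)) :=
        setIntegral_le_two_mul_integral_of_le_add_comp_sub measurableSet_ball hG
          (fun z ↦ le_min (by positivity) (by positivity)) (by positivity)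
          (fun x hx ↦ mul_nonneg (Real.rpow_nonneg (by linarith [mem_ball_zero_iff.1 hx]) _)
            (by positivity))
          (fun x hx ↦ rpow_mul_abs_unitDiscPoissonKernel_sub_rpow_le ha hp.le
            (mem_ball_zero_iff.1 hx) h₁ h₂)
    _ = 2 * (2 / Real.pi) ^ p * I * ‖y₁ - y₂‖ ^ (2 + a - p) := by
        rw [hGI, hdim, ← hI_def, ← add_sub_assoc]
        ring
    _ ≤ (2 * (2 / Real.pi) ^ p * I + 1) * ‖y₁ - y₂‖ ^ (2 + a - p) := by
        gcongr
        linarith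
end

section
/- Let d ≥ 2 and let B be the open unit ball of ℝ^d. There exists a constant C = C(d) such that for all 0 < ε ≤ δ and every x ∈ ℝ^d, the d-dimensional Lebesgue measure of the set {y ∈ B : 1 − |y| ≤ ε} ∩ B(x,δ) is at most C·ε·δ^{d−1}. -/
/-! For `t_k = 1 - k ε` the dilates `t_k • A` of a subset `A` of the ε-collar lie in the pairwise
disjoint shells `t_k (1 - ε) ≤ ‖y‖ < t_k`, and as long as `k ε ≤ 1/2` each has measure at least
`2⁻ᵈ μ A`. More than `η / ε` of them fit into any set `U` containing every dilate `t • A` with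
`1 - η ≤ t ≤ 1`, whence `μ A ≤ 2ᵈ (ε / η) μ U`. For `A = collar ε ∩ B(x, δ)` take `η = δ` and
`U = B(x, 2δ)` when `δ ≤ 1/2`, and `η = 1/2` and `U` the unit ball otherwise. -/

open MeasureTheory Metric Module
open scoped ENNReal Pointwise

def collar {E : Type*} [Norm E] (ε : ℝ) : Set E := {y | ‖y‖ < 1 ∧ 1 - ‖y‖ ≤ ε}

theorem measurableSet_collar {E : Type*} [NormedAddCommGroup E] [MeasurableSpace E]
    [OpensMeasurableSpace E] (ε : ℝ) : MeasurableSet (collar ε : Set E) :=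
  (measurableSet_lt measurable_norm measurable_const).inter
    (measurableSet_le (measurable_const.sub measurable_norm) measurable_const)

section

variable {E : Type*} [NormedAddCommGroup E] [NormedSpace ℝ E]

theorem smul_collar_subset {ε t : ℝ} (ht : 0 < t) :
    t • (collar ε : Set E) ⊆ {y | t * (1 - ε) ≤ ‖y‖ ∧ ‖y‖ < t} := by
  rintro _ ⟨y, ⟨hy1, hyε⟩, rfl⟩
  show t * (1 - ε) ≤ ‖t • y‖ ∧ ‖t • y‖ < t
  rw [norm_smul, Real.norm_of_nonneg ht.le]
  exact ⟨mul_le_mul_of_nonneg_left (by linarith) ht.le, mul_lt_of_lt_one_right ht hy1⟩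

theorem pairwiseDisjoint_smul_collar {ε : ℝ} (hε : 0 < ε) {n : ℕ}
    (hn : ∀ k < n, (k : ℝ) * ε < 1) :
    (Finset.range n : Set ℕ).PairwiseDisjoint fun k : ℕ => (1 - k * ε) • (collar ε : Set E) := by
  have key : ∀ j k, j < k → k < n →
      Disjoint ((1 - j * ε) • (collar ε : Set E)) ((1 - k * ε) • collar ε) := by
    intro j k hjk hk
    have hjk' : (j : ℝ) + 1 ≤ k := by exact_mod_cast hjk
    have hjn := hn j (hjk.trans hk)
    have hkn := hn k hk
    rw [Set.disjoint_left]
    intro y hyj hyk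
    obtain ⟨hj, -⟩ := smul_collar_subset (by linarith) hyj
    obtain ⟨-, hk'⟩ := smul_collar_subset (by linarith) hyk
    -- `(1 - j ε)(1 - ε) ≥ 1 - (j + 1) ε ≥ 1 - k ε`
    nlinarith [mul_nonneg (Nat.cast_nonneg j : (0 : ℝ) ≤ j) (sq_nonneg ε),
      mul_le_mul_of_nonneg_right hjk' hε.le]
  intro j hj k hk hjk
  rcases hjk.lt_or_gt with h | h
  · exact key j k h (by simpa using hk)
  · exact (key k j h (by simpa using hj)).symm

theorem smul_collar_subset_ball {ε t : ℝ} (ht₀ : 0 ≤ t) (ht₁ : t ≤ 1) :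
    t • (collar ε : Set E) ⊆ ball 0 1 := by
  rintro _ ⟨y, ⟨hy1, -⟩, rfl⟩
  rw [mem_ball_zero_iff, norm_smul, Real.norm_of_nonneg ht₀]
  nlinarith [norm_nonneg y]

theorem smul_collar_inter_ball_subset {ε δ t : ℝ} {x : E} (ht : t ≤ 1) (htδ : 1 - t ≤ δ) :
    t • (collar ε ∩ ball x δ) ⊆ ball x (2 * δ) := by
  rintro _ ⟨y, ⟨⟨hy1, -⟩, hyx⟩, rfl⟩
  rw [mem_ball] at hyx ⊢
  have hshift : dist (t • y) y = (1 - t) * ‖y‖ := by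
    rw [dist_eq_norm, show t • y - y = -((1 - t) • y) by module, norm_neg, norm_smul,
      Real.norm_of_nonneg (by linarith)]
  calc dist (t • y) x ≤ dist (t • y) y + dist y x := dist_triangle _ _ _
    _ < 2 * δ := by rw [hshift]; nlinarith [norm_nonneg y]

variable [MeasurableSpace E] [BorelSpace E] [FiniteDimensional ℝ E]
  (μ : Measure E) [μ.IsAddHaarMeasure]

theorem measure_le_two_pow_mul_measure_smul {t : ℝ} (ht : 1 / 2 ≤ t) (s : Set E) :
    μ s ≤ 2 ^ finrank ℝ E * μ (t • s) := by
  rw [Measure.addHaar_smul, ← mul_assoc, abs_of_nonneg (by positivity)]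
  refine le_mul_of_one_le_left' ?_
  rw [← ENNReal.ofReal_ofNat, ← ENNReal.ofReal_pow zero_le_two,
    ← ENNReal.ofReal_mul (by positivity), ← mul_pow]
  exact ENNReal.one_le_ofReal.mpr (one_le_pow₀ (by linarith))

theorem natCast_mul_measure_le_of_smul_subset {A U : Set E} {ε : ℝ} {n : ℕ}
    (hA : MeasurableSet A) (hAc : A ⊆ collar ε) (hε : 0 < ε)
    (hn : ∀ k < n, (k : ℝ) * ε ≤ 1 / 2) (hU : ∀ k < n, (1 - k * ε) • A ⊆ U) :
    n * μ A ≤ 2 ^ finrank ℝ E * μ U := by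
  have hdisj : (Finset.range n : Set ℕ).PairwiseDisjoint fun k : ℕ => (1 - k * ε) • A :=
    (pairwiseDisjoint_smul_collar hε fun k hk => by linarith [hn k hk]).mono
      fun k => Set.smul_set_mono hAc
  calc (n : ℝ≥0∞) * μ A = ∑ k ∈ Finset.range n, μ A := by simp
    _ ≤ ∑ k ∈ Finset.range n, 2 ^ finrank ℝ E * μ ((1 - k * ε) • A) :=
        Finset.sum_le_sum fun k hk => measure_le_two_pow_mul_measure_smul μ
          (by linarith [hn k (Finset.mem_range.mp hk)]) A
    _ = 2 ^ finrank ℝ E * μ (⋃ k ∈ Finset.range n, (1 - k * ε) • A) := by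
        rw [← Finset.mul_sum, measure_biUnion_finset hdisj fun k _ => hA.const_smul₀ _]
    _ ≤ 2 ^ finrank ℝ E * μ U := by
        gcongr
        exact Set.iUnion₂_subset fun k hk => hU k (Finset.mem_range.mp hk)

theorem measure_le_of_smul_subset {A U : Set E} {ε η : ℝ} (hA : MeasurableSet A)
    (hAc : A ⊆ collar ε) (hε : 0 < ε) (hη₀ : 0 < η) (hη : η ≤ 1 / 2)
    (hU : ∀ t : ℝ, 1 - η ≤ t → t ≤ 1 → t • A ⊆ U) :
    μ A ≤ ENNReal.ofReal (2 ^ finrank ℝ E * ε / η) * μ U := by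
  set n := ⌊η / ε⌋₊ + 1
  have hkn : ∀ k < n, (k : ℝ) * ε ≤ η := fun k hk => by
    rw [← le_div_iff₀ hε, ← Nat.le_floor_iff (by positivity)]
    exact Nat.lt_succ_iff.mp hk
  have hn : η < n * ε := by
    rw [← div_lt_iff₀ hε]
    exact_mod_cast Nat.lt_floor_add_one (η / ε)
  have hpack := natCast_mul_measure_le_of_smul_subset μ hA hAc hε
    (fun k hk => (hkn k hk).trans hη)
    (fun k hk => hU _ (by linarith [hkn k hk]) (by nlinarith [(Nat.cast_nonneg k : (0 : ℝ) ≤ k)]))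
  calc μ A ≤ ENNReal.ofReal (ε / η) * n * μ A := by
        refine le_mul_of_one_le_left' ?_
        rw [← ENNReal.ofReal_natCast, ← ENNReal.ofReal_mul (by positivity)]
        refine ENNReal.one_le_ofReal.mpr ?_
        rw [div_mul_eq_mul_div, one_le_div hη₀]
        linarith
    _ ≤ ENNReal.ofReal (ε / η) * (2 ^ finrank ℝ E * μ U) := by
        rw [mul_assoc]
        gcongr
    _ = ENNReal.ofReal (2 ^ finrank ℝ E * ε / η) * μ U := by
        rw [← mul_assoc, mul_div_assoc, ENNReal.ofReal_mul (by positivity),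
          ENNReal.ofReal_pow zero_le_two, ENNReal.ofReal_ofNat, mul_comm (ENNReal.ofReal _)]

theorem measure_collar_inter_ball_le (hd : 1 ≤ finrank ℝ E) {ε δ : ℝ} (hε : 0 < ε)
    (hεδ : ε ≤ δ) (x : E) :
    μ (collar ε ∩ ball x δ) ≤
      ENNReal.ofReal (4 ^ finrank ℝ E * ε * δ ^ (finrank ℝ E - 1)) * μ (ball 0 1) := by
  obtain ⟨m, hm⟩ : ∃ m, finrank ℝ E = m + 1 := ⟨finrank ℝ E - 1, by omega⟩
  rw [hm, Nat.add_sub_cancel, show (4 : ℝ) = 2 * 2 by norm_num, mul_pow]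
  have hδ : 0 < δ := hε.trans_le hεδ
  rcases le_or_gt δ (1 / 2) with hδ₂ | hδ₂
  · calc μ (collar ε ∩ ball x δ)
        ≤ ENNReal.ofReal (2 ^ finrank ℝ E * ε / δ) * μ (ball x (2 * δ)) :=
          measure_le_of_smul_subset μ ((measurableSet_collar ε).inter measurableSet_ball)
            Set.inter_subset_left hε hδ hδ₂
            fun t ht₁ ht₂ => smul_collar_inter_ball_subset ht₂ (by linarith)
      _ = ENNReal.ofReal (2 ^ (m + 1) * 2 ^ (m + 1) * ε * δ ^ m) * μ (ball 0 1) := by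
          rw [Measure.addHaar_ball_of_pos μ x (by positivity), ← mul_assoc,
            ← ENNReal.ofReal_mul (by positivity), hm]
          congr 2
          field_simp
          ring
  · calc μ (collar ε ∩ ball x δ) ≤ μ (collar ε) := measure_mono Set.inter_subset_left
      _ ≤ ENNReal.ofReal (2 ^ finrank ℝ E * ε / (1 / 2)) * μ (ball 0 1) :=
          measure_le_of_smul_subset μ (measurableSet_collar ε) subset_rfl hε (by norm_num) le_rfl
            fun t ht₁ ht₂ => smul_collar_subset_ball (by linarith) ht₂
      _ ≤ ENNReal.ofReal (2 ^ (m + 1) * 2 ^ (m + 1) * ε * δ ^ m) * μ (ball 0 1) := by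
          have hδm : 1 ≤ 2 ^ m * δ ^ m := by
            rw [← mul_pow]
            exact one_le_pow₀ (by linarith)
          rw [hm]
          gcongr
          calc 2 ^ (m + 1) * ε / (1 / 2) = 2 ^ (m + 1) * 2 * ε * 1 := by ring
            _ ≤ 2 ^ (m + 1) * 2 * ε * (2 ^ m * δ ^ m) := by gcongr
            _ = 2 ^ (m + 1) * 2 ^ (m + 1) * ε * δ ^ m := by ring

end

/-- Volume estimate from the proof of Proposition 2.1, for the unit ball of `ℝ^d`:
there is `C = C(d)` such that for all `0 < ε ≤ δ` and every `x`, the Lebesgue measure of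
`{y ∈ B : 1 − |y| ≤ ε} ∩ B(x,δ)` is at most `C·ε·δ^{d−1}`. -/
theorem volume_collar_inter_ball_le (d : ℕ) (hd : 2 ≤ d) :
    ∃ C : ℝ, 0 < C ∧ ∀ ε δ : ℝ, 0 < ε → ε ≤ δ → ∀ x : EuclideanSpace ℝ (Fin d),
      volume ({y : EuclideanSpace ℝ (Fin d) | ‖y‖ < 1 ∧ 1 - ‖y‖ ≤ ε} ∩ Metric.ball x δ)
        ≤ ENNReal.ofReal (C * ε * δ ^ (d - 1)) := by
  obtain ⟨ω, hω₀, hω⟩ : ∃ ω : ℝ, 0 < ω ∧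
      volume (ball (0 : EuclideanSpace ℝ (Fin d)) 1) = ENNReal.ofReal ω :=
    ⟨_, ENNReal.toReal_pos (measure_ball_pos _ _ one_pos).ne' measure_ball_lt_top.ne,
      (ENNReal.ofReal_toReal measure_ball_lt_top.ne).symm⟩
  refine ⟨4 ^ d * ω, by positivity, fun ε δ hε hεδ x => ?_⟩
  calc volume (collar ε ∩ ball x δ)
      ≤ ENNReal.ofReal (4 ^ d * ε * δ ^ (d - 1)) *
          volume (ball (0 : EuclideanSpace ℝ (Fin d)) 1) := by
        simpa using measure_collar_inter_ball_le volume (by simp; omega) hε hεδ x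
    _ = ENNReal.ofReal (4 ^ d * ω * ε * δ ^ (d - 1)) := by
        rw [hω, ← ENNReal.ofReal_mul' hω₀.le]
        ring_nf
end

section
/- Let d ≥ 2, let D ⊂ ℝ^d be a bounded open set, let 1 < p < (d+1)/(d−1), and let η > 0. There exists a constant C = C(d, p, η, D) such that for every x ∈ D with dist(x, Dᶜ) ≥ η and every z in the topological boundary ∂D of D, ∫_D dist(y, Dᶜ)^{1+p} · |x − y|^{1−d} · |y − z|^{−dp} dy ≤ C, where the integral is with respect to d-dimensional Lebesgue measure. -/
/-! Since `z ∉ D`, `dist(y, Dᶜ) ≤ |y - z|`, so the integrand is at most `|x - y|^a |y - z|^b` with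
`a = 1 - d` and `b = 1 + p - dp`; the bounds on `p` are exactly what puts `b` in `(-d, 0)`.
As `|x - z| ≥ η`, one of `|x - y|`, `|y - z|` is at least `η / 2`, hence
`|x - y|^a |y - z|^b ≤ (η/2)^b |x - y|^a + (η/2)^a |y - z|^b`. Both terms are Riesz kernels of
order `> -d`, integrable over a ball of radius `diam D + 1` around their singularity with an
integral that, by translation invariance, does not depend on the centre. -/

open MeasureTheory Metric Set Module

theorem preimage_sub_const_ball_zero {E : Type*} [SeminormedAddCommGroup E] (c : E) (r : ℝ) :
    (· - c) ⁻¹' ball (0 : E) r = ball c r := by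
  ext y
  simp [dist_eq_norm]

theorem setIntegral_ball_norm_sub_rpow {E : Type*} [NormedAddCommGroup E] [MeasurableSpace E]
    [BorelSpace E] (μ : Measure E) [μ.IsAddRightInvariant] (a : ℝ) (c : E) (r : ℝ) :
    ∫ y in ball c r, ‖y - c‖ ^ a ∂μ = ∫ y in ball 0 r, ‖y‖ ^ a ∂μ := by
  have := (measurePreserving_sub_right μ c).setIntegral_preimage_emb
    (measurableEmbedding_subRight c) (fun y => ‖y‖ ^ a) (ball 0 r)
  rwa [preimage_sub_const_ball_zero] at this

section Riesz

variable {E : Type*} [NormedAddCommGroup E] [NormedSpace ℝ E] [FiniteDimensional ℝ E]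
  [MeasurableSpace E] [BorelSpace E] (μ : Measure E) [μ.IsAddHaarMeasure] {a : ℝ}

theorem integrableOn_ball_norm_sub_rpow (hd : 1 ≤ finrank ℝ E) (ha : -(finrank ℝ E : ℝ) < a)
    (c : E) (r : ℝ) : IntegrableOn (fun y => ‖y - c‖ ^ a) (ball c r) μ := by
  have h0 : IntegrableOn (fun y : E => ‖y‖ ^ a) (ball 0 r) μ :=
    integrableOn_ball_of_norm_le_rpow (C := 1) (α := -a) hd (by linarith)
      (ae_of_all _ fun y => by rw [Real.norm_of_nonneg (by positivity), one_mul, neg_neg])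
      (measurable_norm.pow_const a).aestronglyMeasurable
  rw [← (measurePreserving_sub_right μ c).integrableOn_comp_preimage
    (measurableEmbedding_subRight c)] at h0
  rwa [preimage_sub_const_ball_zero] at h0

theorem setIntegral_norm_sub_rpow_le (hd : 1 ≤ finrank ℝ E) (ha : -(finrank ℝ E : ℝ) < a)
    {c : E} {r : ℝ} {s : Set E} (hs : s ⊆ ball c r) :
    ∫ y in s, ‖y - c‖ ^ a ∂μ ≤ ∫ y in ball 0 r, ‖y‖ ^ a ∂μ := by
  rw [← setIntegral_ball_norm_sub_rpow μ a c r]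
  exact setIntegral_mono_set (integrableOn_ball_norm_sub_rpow μ hd ha c r)
    (ae_of_all _ fun y => by positivity) (ae_of_all _ hs)

end Riesz

theorem Bornology.IsBounded.subset_ball_of_mem_closure {X : Type*} [PseudoMetricSpace X]
    {s : Set X} (hs : Bornology.IsBounded s) {c : X} (hc : c ∈ closure s) :
    s ⊆ ball c (diam s + 1) := fun y hy =>
  calc dist y c ≤ diam (closure s) := dist_le_diam_of_mem hs.closure (subset_closure hy) hc
    _ = diam s := diam_closure s
    _ < diam s + 1 := lt_add_one _

theorem Real.rpow_mul_rpow_le_add {s t η a b : ℝ} (hs : 0 ≤ s) (ht : 0 ≤ t) (hη : 0 < η)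
    (hst : η ≤ s + t) (ha : a ≤ 0) (hb : b ≤ 0) :
    s ^ a * t ^ b ≤ (η / 2) ^ b * s ^ a + (η / 2) ^ a * t ^ b := by
  rcases le_total s t with hle | hle
  · have : t ^ b ≤ (η / 2) ^ b := Real.rpow_le_rpow_of_nonpos (by positivity) (by linarith) hb
    calc s ^ a * t ^ b ≤ (η / 2) ^ b * s ^ a := by rw [mul_comm]; gcongr
      _ ≤ _ := le_add_of_nonneg_right (by positivity)
  · have : s ^ a ≤ (η / 2) ^ a := Real.rpow_le_rpow_of_nonpos (by positivity) (by linarith) ha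
    calc s ^ a * t ^ b ≤ (η / 2) ^ a * t ^ b := by gcongr
      _ ≤ _ := le_add_of_nonneg_left (by positivity)

theorem infDist_rpow_mul_norm_rpow_mul_le {E : Type*} [NormedAddCommGroup E] {s : Set E}
    {x y z : E} {η a q e : ℝ} (hη : 0 < η) (hx : η ≤ infDist x s) (hy : y ∉ s) (hz : z ∈ s)
    (ha : a ≤ 0) (hq : 0 ≤ q) (hqe : q + e ≤ 0) :
    infDist y s ^ q * ‖x - y‖ ^ a * ‖y - z‖ ^ e ≤
      (η / 2) ^ (q + e) * ‖y - x‖ ^ a + (η / 2) ^ a * ‖y - z‖ ^ (q + e) := by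
  have hyz : 0 < ‖y - z‖ := norm_pos_iff.2 (sub_ne_zero.2 (ne_of_mem_of_not_mem hz hy).symm)
  have hxz : η ≤ ‖y - x‖ + ‖y - z‖ := by
    simpa only [dist_eq_norm] using (hx.trans (infDist_le_dist_of_mem hz)).trans
      (dist_triangle_left x z y)
  calc infDist y s ^ q * ‖x - y‖ ^ a * ‖y - z‖ ^ e
      = ‖y - x‖ ^ a * (infDist y s ^ q * ‖y - z‖ ^ e) := by rw [norm_sub_rev]; ring
    _ ≤ ‖y - x‖ ^ a * (‖y - z‖ ^ q * ‖y - z‖ ^ e) := by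
      gcongr
      · exact infDist_nonneg
      · simpa only [dist_eq_norm] using infDist_le_dist_of_mem hz
    _ = ‖y - x‖ ^ a * ‖y - z‖ ^ (q + e) := by rw [Real.rpow_add hyz]
    _ ≤ _ := Real.rpow_mul_rpow_le_add (norm_nonneg _) (norm_nonneg _) hη hxz ha hqe

/-- The analytic core of estimate (3.9): for `D ⊂ ℝ^d` bounded open, `1 < p < (d+1)/(d−1)`
and `η > 0`, there is `C` such that for `x ∈ D` with `dist(x,Dᶜ) ≥ η` and `z ∈ ∂D`,
`∫_D dist(y,Dᶜ)^{1+p}·|x−y|^{1−d}·|y−z|^{−dp} dy ≤ C`. -/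
theorem integral_dist_rpow_mul_rpow_le (d : ℕ) (hd : 2 ≤ d)
    (D : Set (EuclideanSpace ℝ (Fin d))) (hD : IsOpen D) (hDb : Bornology.IsBounded D)
    (p : ℝ) (hp : 1 < p) (hp' : p < ((d : ℝ) + 1) / ((d : ℝ) - 1)) (η : ℝ) (hη : 0 < η) :
    ∃ C : ℝ, ∀ x ∈ D, η ≤ Metric.infDist x Dᶜ → ∀ z ∈ frontier D,
      ∫ y in D,
          Metric.infDist y Dᶜ ^ (1 + p) * ‖x - y‖ ^ (1 - (d : ℝ)) *
            ‖y - z‖ ^ (-((d : ℝ) * p)) ≤ C := by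
  have hd' : (2 : ℝ) ≤ d := by exact_mod_cast hd
  have hdim : finrank ℝ (EuclideanSpace ℝ (Fin d)) = d := finrank_euclideanSpace_fin
  have hpd : p * ((d : ℝ) - 1) < d + 1 := (lt_div_iff₀ (by linarith)).1 hp'
  set a : ℝ := 1 - d
  set b : ℝ := 1 + p + -((d : ℝ) * p)
  have ha : -(finrank ℝ (EuclideanSpace ℝ (Fin d)) : ℝ) < a := by rw [hdim]; linarith
  have hb : -(finrank ℝ (EuclideanSpace ℝ (Fin d)) : ℝ) < b := by rw [hdim]; linarith
  have hd1 : 1 ≤ finrank ℝ (EuclideanSpace ℝ (Fin d)) := by omega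
  set r := diam D + 1
  refine ⟨(η / 2) ^ b * (∫ y in ball (0 : EuclideanSpace ℝ (Fin d)) r, ‖y‖ ^ a) +
    (η / 2) ^ a * ∫ y in ball (0 : EuclideanSpace ℝ (Fin d)) r, ‖y‖ ^ b, fun x hx hxη z hz => ?_⟩
  rw [hD.frontier_eq] at hz
  have hxD := hDb.subset_ball_of_mem_closure (subset_closure hx)
  have hzD := hDb.subset_ball_of_mem_closure hz.1
  have hIx := (integrableOn_ball_norm_sub_rpow volume hd1 ha x r).mono_set hxD
  have hIz := (integrableOn_ball_norm_sub_rpow volume hd1 hb z r).mono_set hzD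
  calc _ ≤ ∫ y in D, ((η / 2) ^ b * ‖y - x‖ ^ a + (η / 2) ^ a * ‖y - z‖ ^ b) := by
        refine integral_mono_of_nonneg (ae_of_all _ fun y => ?_) ((hIx.const_mul _).add
          (hIz.const_mul _)) (ae_restrict_of_forall_mem hD.measurableSet fun y hy => ?_)
        · have := infDist_nonneg (x := y) (s := Dᶜ)
          positivity
        · exact infDist_rpow_mul_norm_rpow_mul_le hη hxη (not_not_intro hy) hz.2
            (by linarith) (by linarith) (by nlinarith)
    _ = (η / 2) ^ b * (∫ y in D, ‖y - x‖ ^ a) + (η / 2) ^ a * ∫ y in D, ‖y - z‖ ^ b := by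
        rw [integral_add (hIx.const_mul _) (hIz.const_mul _), integral_const_mul,
          integral_const_mul]
    _ ≤ _ := by
        gcongr
        · exact setIntegral_norm_sub_rpow_le volume hd1 ha hxD
        · exact setIntegral_norm_sub_rpow_le volume hd1 hb hzD
end
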